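/- arXiv:2304.08977 — 4 statements merged into one kernel-verified Lean document; each statement's English description precedes it below -/
import Mathlib

section
/- Let V be a finite-dimensional inner product space, k > m, and let 𝒫_𝒢 denote the orthogonal projection of Λ^k V* ⊗ Λ^m V* onto the subspace 𝒢 = ker 𝔊 of Bianchi (k,m)-covectors. Then for ξ ∈ V* and ψ ∈ 𝒢, the Bianchi interior product satisfies the explicit formula 𝒫_𝒢 i_{ξ^♯} ψ = i_{ξ^♯} ψ − (1/α(k,m)) 𝔊_V i^V_{ξ^♯} ψ, where α(k,m) = k − m + 1. -/
/-!
Since `𝔊 ψ = 0`, the anticommutators give `𝔊 (i_{ξ^♯} ψ) = i^V_{ξ^♯} ψ` and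
`𝔊 (i^V_{ξ^♯} ψ) = 0`; on this Bianchi `(k, m-1)`-covector the commutator `[𝔊, 𝔊_V]` then says
`𝔊 𝔊_V (i^V_{ξ^♯} ψ) = α(k,m) i^V_{ξ^♯} ψ`. Hence subtracting `α⁻¹ 𝔊_V i^V_{ξ^♯} ψ` from
`i_{ξ^♯} ψ` lands in `ker 𝔊`, and the subtracted term lies in `Im 𝔊_V ⊥ ker 𝔊`.
-/

section ProjectionOntoKernel

variable {D : Type*} [NormedAddCommGroup D] [InnerProductSpace ℝ D] (G GV : D →ₗ[ℝ] D)

theorem map_sub_inv_smul_eq_zero_and_orthogonal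
    (horth : ∀ x y : D, G y = 0 → (inner ℝ (GV x) y : ℝ) = 0)
    {c : ℝ} (hc : c ≠ 0) {v w : D} (hv : G v = w) (hw : G (GV w) = c • w) :
    G (v - c⁻¹ • GV w) = 0 ∧
      ∀ y, G y = 0 → (inner ℝ (v - (v - c⁻¹ • GV w)) y : ℝ) = 0 := by
  refine ⟨?_, fun y hy => ?_⟩
  · rw [map_sub, map_smul, hv, hw, inv_smul_smul₀ hc, sub_self]
  · rw [sub_sub_cancel, inner_smul_left, horth _ _ hy, mul_zero]

end ProjectionOntoKernel

theorem bianchi_interior_product_formula_general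
    {D : Type*} [NormedAddCommGroup D] [InnerProductSpace ℝ D]
    (Λ : ℤ → ℤ → Submodule ℝ D)
    (G GV : D →ₗ[ℝ] D)
    -- interior products i_{ξ^♯} and i^V_{ξ^♯}
    (iξ iVξ : D →ₗ[ℝ] D)
    (hGVmap : ∀ (k m : ℤ), ∀ ψ ∈ Λ k m, GV ψ ∈ Λ (k - 1) (m + 1))
    (himap : ∀ (k m : ℤ), ∀ ψ ∈ Λ k m, iξ ψ ∈ Λ (k - 1) m)
    (hiVmap : ∀ (k m : ℤ), ∀ ψ ∈ Λ k m, iVξ ψ ∈ Λ k (m - 1))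
    -- {𝔊, i_{ξ^♯}} = i^V_{ξ^♯}
    (hanti1 : ∀ ψ, G (iξ ψ) + iξ (G ψ) = iVξ ψ)
    -- {𝔊, i^V_{ξ^♯}} = 0
    (hanti2 : ∀ ψ, G (iVξ ψ) + iVξ (G ψ) = 0)
    -- [𝔊, 𝔊_V] = (k−m)·Id
    (hcomm : ∀ (k m : ℤ), ∀ ψ ∈ Λ k m, G (GV ψ) - GV (G ψ) = ((k - m : ℤ) : ℝ) • ψ)
    -- Im 𝔊_V is orthogonal to ker 𝔊
    (horth : ∀ x y : D, G y = 0 → (inner ℝ (GV x) y : ℝ) = 0)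
    (k m : ℤ) (hkm : m < k)
    (ψ : D) (hψ : ψ ∈ Λ k m) (hψG : G ψ = 0) :
    iξ ψ - (((k - m + 1 : ℤ) : ℝ))⁻¹ • GV (iVξ ψ) ∈ Λ (k - 1) m ∧
    G (iξ ψ - (((k - m + 1 : ℤ) : ℝ))⁻¹ • GV (iVξ ψ)) = 0 ∧
    (∀ y, y ∈ Λ (k - 1) m → G y = 0 →
      (inner ℝ (iξ ψ - (iξ ψ - (((k - m + 1 : ℤ) : ℝ))⁻¹ • GV (iVξ ψ))) y : ℝ) = 0) := by
  have hα : ((k - m + 1 : ℤ) : ℝ) ≠ 0 := by exact_mod_cast (by omega : k - m + 1 ≠ 0)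
  have hiV : iVξ ψ ∈ Λ k (m - 1) := hiVmap k m ψ hψ
  have hGViV : GV (iVξ ψ) ∈ Λ (k - 1) m := by simpa using hGVmap k (m - 1) _ hiV
  have hGiξ : G (iξ ψ) = iVξ ψ := by simpa [hψG] using hanti1 ψ
  have hGiV : G (iVξ ψ) = 0 := by simpa [hψG] using hanti2 ψ
  have hGGV : G (GV (iVξ ψ)) = ((k - m + 1 : ℤ) : ℝ) • iVξ ψ := by
    simpa [hGiV, sub_add] using hcomm k (m - 1) _ hiV
  obtain ⟨hker, hperp⟩ :=
    map_sub_inv_smul_eq_zero_and_orthogonal G GV horth hα hGiξ hGGV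
  exact ⟨sub_mem (himap k m ψ hψ) (Submodule.smul_mem _ _ hGViV), hker,
    fun y _ hy => hperp y hy⟩

/-- For `k > m`, `ξ ∈ V*` and `ψ` a Bianchi `(k,m)`-covector (`ψ ∈ ker 𝔊`), the
Bianchi interior product satisfies `𝒫_𝒢 i_{ξ^♯} ψ = i_{ξ^♯} ψ − (1/α(k,m)) 𝔊_V i^V_{ξ^♯} ψ`
with `α(k,m) = k − m + 1`, i.e.: (a) the right-hand side lies in `ker 𝔊` (in bidegree
`(k−1,m)`), and (b) the difference `i_{ξ^♯}ψ − RHS = (1/α) 𝔊_V i^V_{ξ^♯}ψ` is orthogonal to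
every Bianchi `(k−1,m)`-covector, so the RHS is the orthogonal projection of `i_{ξ^♯}ψ` onto
`ker 𝔊`. The relations `{𝔊, i_X} = i^V_X`, `{𝔊, i^V_X} = 0`, `[𝔊,𝔊_V] = (k−m)·Id`, and the
orthogonality of `Im 𝔊_V` to `ker 𝔊` may be used. -/
theorem bianchi_interior_product_formula
    {D : Type*} [NormedAddCommGroup D] [InnerProductSpace ℝ D]
    (Λ : ℤ → ℤ → Submodule ℝ D)
    (G GV : D →ₗ[ℝ] D)
    -- interior products i_{ξ^♯} and i^V_{ξ^♯}
    (iξ iVξ : D →ₗ[ℝ] D)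
    (hGmap : ∀ (k m : ℤ), ∀ ψ ∈ Λ k m, G ψ ∈ Λ (k + 1) (m - 1))
    (hGVmap : ∀ (k m : ℤ), ∀ ψ ∈ Λ k m, GV ψ ∈ Λ (k - 1) (m + 1))
    (himap : ∀ (k m : ℤ), ∀ ψ ∈ Λ k m, iξ ψ ∈ Λ (k - 1) m)
    (hiVmap : ∀ (k m : ℤ), ∀ ψ ∈ Λ k m, iVξ ψ ∈ Λ k (m - 1))
    -- {𝔊, i_{ξ^♯}} = i^V_{ξ^♯}
    (hanti1 : ∀ ψ, G (iξ ψ) + iξ (G ψ) = iVξ ψ)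
    -- {𝔊, i^V_{ξ^♯}} = 0
    (hanti2 : ∀ ψ, G (iVξ ψ) + iVξ (G ψ) = 0)
    -- [𝔊, 𝔊_V] = (k−m)·Id
    (hcomm : ∀ (k m : ℤ), ∀ ψ ∈ Λ k m, G (GV ψ) - GV (G ψ) = ((k - m : ℤ) : ℝ) • ψ)
    -- Im 𝔊_V is orthogonal to ker 𝔊
    (horth : ∀ x y : D, G y = 0 → (inner ℝ (GV x) y : ℝ) = 0)
    (k m : ℤ) (hkm : m < k)
    (ψ : D) (hψ : ψ ∈ Λ k m) (hψG : G ψ = 0) :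
    iξ ψ - (((k - m + 1 : ℤ) : ℝ))⁻¹ • GV (iVξ ψ) ∈ Λ (k - 1) m ∧
    G (iξ ψ - (((k - m + 1 : ℤ) : ℝ))⁻¹ • GV (iVξ ψ)) = 0 ∧
    (∀ y, y ∈ Λ (k - 1) m → G y = 0 →
      (inner ℝ (iξ ψ - (iξ ψ - (((k - m + 1 : ℤ) : ℝ))⁻¹ • GV (iVξ ψ))) y : ℝ) = 0) :=
  bianchi_interior_product_formula_general Λ G GV iξ iVξ hGVmap himap hiVmap hanti1 hanti2 hcomm
    horth k m hkm ψ hψ hψG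
end

section
/- Let V be a finite-dimensional inner product space, ξ ∈ V* with |ξ| = 1, k < m, and set ξ_V = 𝔊_V ξ (the copy of ξ in the vector slot). Define σ_d(ψ) = ξ ∧ ψ − (1/α(m,k)) 𝔊(ξ_V ∧ ψ) and σ_δ(ψ) = i_{ξ^♯} ψ for ψ in the space 𝒢^{k,m} = ker 𝔊_V ⊂ Λ^k V* ⊗ Λ^m V*, where α(m,k) = m − k + 1. Then the map σ_δ ⊕ σ_d : 𝒢^{k,m} → (Λ^{k-1}⊗Λ^m) ⊕ (Λ^{k+1}⊗Λ^m) is injective. -/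
/-!
Apply `i_{ξ^♯}` to `σ_d ψ = 0`. Since `i_{ξ^♯} ψ = 0`, the Clifford identity turns `i_{ξ^♯}(ξ ∧ ψ)`
into `ψ`, and the anticommutation `{𝔊, i_{ξ^♯}} = i^V_{ξ^♯}` turns `i_{ξ^♯} 𝔊(ξ_V ∧ ψ)` into
`i^V_{ξ^♯}(ξ_V ∧ ψ)`, so `α ψ = i^V_{ξ^♯}(ξ_V ∧ ψ)`. Pairing with `ψ` and using the Clifford identity
on the vector factor gives `α |ψ|² = |ψ|² - |i^V_{ξ^♯} ψ|² ≤ |ψ|²`, and `α = m - k + 1 > 1` forces `ψ = 0`.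
-/

open RealInnerProductSpace

section Algebraic

variable {R M : Type*} [Semiring R] [AddCommMonoid M] [Module R M]

theorem smul_eq_interior_exterior_of_symbol_eq_zero
    {G w wV iξ iVξ : M →ₗ[R] M}
    (hclif : ∀ x, iξ (w x) + w (iξ x) = x)
    (hcomm : ∀ x, iξ (wV x) = wV (iξ x))
    (hanti : ∀ x, G (iξ x) + iξ (G x) = iVξ x)
    {c : R} {ψ : M} (hδ : iξ ψ = 0) (hd : c • w ψ = G (wV ψ)) :
    c • ψ = iVξ (wV ψ) := by
  have hψ : iξ (w ψ) = ψ := by simpa [hδ] using hclif ψ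
  have hG : iξ (G (wV ψ)) = iVξ (wV ψ) := by simpa [hcomm, hδ] using hanti (wV ψ)
  rw [← hG, ← hd, map_smul, hψ]

end Algebraic

section InnerProduct

variable {E : Type*} [NormedAddCommGroup E] [InnerProductSpace ℝ E] {e i : E →ₗ[ℝ] E}

theorem inner_interior_exterior_self (hclif : ∀ x, i (e x) + e (i x) = x)
    (hadj : ∀ x y, ⟪e x, y⟫ = ⟪x, i y⟫) (x : E) :
    ⟪i (e x), x⟫ = ‖x‖ ^ 2 - ‖i x‖ ^ 2 := by
  have hx : i (e x) = x - e (i x) := eq_sub_of_add_eq (hclif x)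
  rw [hx, inner_sub_left, hadj, real_inner_self_eq_norm_sq, real_inner_self_eq_norm_sq]

theorem eq_zero_of_smul_eq_interior_exterior (hclif : ∀ x, i (e x) + e (i x) = x)
    (hadj : ∀ x y, ⟪e x, y⟫ = ⟪x, i y⟫) {c : ℝ} (hc : 1 < c) {x : E}
    (hx : c • x = i (e x)) : x = 0 := by
  have h := inner_interior_exterior_self hclif hadj x
  rw [← hx, real_inner_smul_left, real_inner_self_eq_norm_sq] at h
  have : ‖x‖ ^ 2 = 0 := by nlinarith [sq_nonneg ‖x‖, sq_nonneg ‖i x‖]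
  simpa using this

end InnerProduct

theorem symbol_injectivity_dG_deltaG_general
    {D : Type*} [NormedAddCommGroup D] [InnerProductSpace ℝ D]
    (G : D →ₗ[ℝ] D)
    (w wV iξ iVξ : D →ₗ[ℝ] D)
    -- Clifford identity on the form factor (|ξ| = 1)
    (hclif : ∀ x, iξ (w x) + w (iξ x) = x)
    -- Clifford identity on the vector factor (|ξ| = 1)
    (hclifV : ∀ x, iVξ (wV x) + wV (iVξ x) = x)
    -- operations acting on different factors commute
    (hcomm1 : ∀ x, iξ (wV x) = wV (iξ x))
    -- {𝔊, i_{ξ^♯}} = i^V_{ξ^♯}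
    (hanti : ∀ x, G (iξ x) + iξ (G x) = iVξ x)
    -- adjointness of ξ_V∧· and i^V_{ξ^♯}
    (hadjV : ∀ x y, (inner ℝ (wV x) y : ℝ) = (inner ℝ x (iVξ y) : ℝ))
    (k m : ℤ) (hkm : k < m)
    (ψ : D)
    -- σ_δ ψ = 0 and σ_d ψ = 0
    (hδ : iξ ψ = 0)
    (hd : w ψ - (((m - k + 1 : ℤ) : ℝ))⁻¹ • G (wV ψ) = 0) :
    ψ = 0 := by
  set α : ℝ := ((m - k + 1 : ℤ) : ℝ)
  have hα : 1 < α := by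
    have : (1 : ℤ) < m - k + 1 := by omega
    simp only [α]
    exact_mod_cast this
  have hd' : α • w ψ = G (wV ψ) :=
    (eq_inv_smul_iff₀ (zero_lt_one.trans hα).ne').mp (sub_eq_zero.mp hd)
  exact eq_zero_of_smul_eq_interior_exterior hclifV hadjV hα
    (smul_eq_interior_exterior_of_symbol_eq_zero hclif hcomm1 hanti hδ hd')

/-- For `|ξ| = 1` and `k < m`, the symbol map `σ_δ ⊕ σ_d` of `δ^𝒢 ⊕ d^𝒢`
is injective on the Bianchi covectors `𝒢^{k,m} = ker 𝔊_V ⊂ Λ^k V* ⊗ Λ^m V*`, where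
`σ_d(ψ) = ξ ∧ ψ − (1/α(m,k)) 𝔊(ξ_V ∧ ψ)` with `α(m,k) = m − k + 1`, and `σ_δ(ψ) = i_{ξ^♯}ψ`.
Here `w = ξ∧·` and `wV = ξ_V∧·` are wedging by `ξ` into the form and vector factors, and
`iξ`, `iVξ` the corresponding interior products; the identities
`i_{ξ^♯}(ξ∧ψ) + ξ∧(i_{ξ^♯}ψ) = |ξ|²ψ` and `{𝔊, i_{ξ^♯}} = i^V_{ξ^♯}` may be used. -/
theorem symbol_injectivity_dG_deltaG
    {D : Type*} [NormedAddCommGroup D] [InnerProductSpace ℝ D]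
    (Λ : ℤ → ℤ → Submodule ℝ D)
    (G GV : D →ₗ[ℝ] D)
    (w wV iξ iVξ : D →ₗ[ℝ] D)
    -- Clifford identity on the form factor (|ξ| = 1)
    (hclif : ∀ x, iξ (w x) + w (iξ x) = x)
    -- Clifford identity on the vector factor (|ξ| = 1)
    (hclifV : ∀ x, iVξ (wV x) + wV (iVξ x) = x)
    -- operations acting on different factors commute
    (hcomm1 : ∀ x, iξ (wV x) = wV (iξ x))
    -- {𝔊, i_{ξ^♯}} = i^V_{ξ^♯}
    (hanti : ∀ x, G (iξ x) + iξ (G x) = iVξ x)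
    -- adjointness of ξ_V∧· and i^V_{ξ^♯}
    (hadjV : ∀ x y, (inner ℝ (wV x) y : ℝ) = (inner ℝ x (iVξ y) : ℝ))
    (k m : ℤ) (hkm : k < m)
    (ψ : D) (hψ : ψ ∈ Λ k m) (hψGV : GV ψ = 0)
    -- σ_δ ψ = 0 and σ_d ψ = 0
    (hδ : iξ ψ = 0)
    (hd : w ψ - (((m - k + 1 : ℤ) : ℝ))⁻¹ • G (wV ψ) = 0) :
    ψ = 0 :=
  symbol_injectivity_dG_deltaG_general G w wV iξ iVξ hclif hclifV hcomm1 hanti hadjV k m hkm ψ hδ hd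
end

section
/- Let V be a finite-dimensional inner product space, ξ ∈ V* nonzero, and ξ_V its copy in the vector slot. If ψ ∈ Λ^m V* ⊗ Λ^m V* is symmetric (ψ^T = ψ) and satisfies both i_{ξ^♯} ψ = 0 and ξ ∧ ξ_V ∧ ψ = 0, then ψ = 0. In other words, the symbol map ψ ↦ (i_{ξ^♯}ψ, ξ∧ξ_V∧ψ) of (δ^∇ ⊕ H) is injective on symmetric (m,m)-covectors. -/
/-! Applying `i^V_ξ i_ξ` to `ξ ∧ ξ_V ∧ ψ` and using the Clifford relations
`i_ξ (ξ ∧ ·) + ξ ∧ i_ξ · = |ξ|²` on each factor gives `|ξ|⁴ ψ`, because `ψ` is killed by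
`i_ξ` and, being symmetric, also by `i^V_ξ`. So `ξ ∧ ξ_V ∧ ψ = 0` forces `ψ = 0`. -/

section Clifford

variable {R M : Type*} [Semiring R] [AddCommMonoid M] [Module R M]

theorem apply_apply_eq_smul_of_anticomm {i w : M →ₗ[R] M} {c : R}
    (hclif : ∀ x, i (w x) + w (i x) = c • x) {x : M} (hx : i x = 0) :
    i (w x) = c • x := by
  simpa [hx] using hclif x

theorem interior_interior_wedge_wedge {w wV iξ iVξ : M →ₗ[R] M} {c : R}
    (hclif : ∀ x, iξ (w x) + w (iξ x) = c • x)
    (hclifV : ∀ x, iVξ (wV x) + wV (iVξ x) = c • x)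
    (hcomm : ∀ x, iξ (wV x) = wV (iξ x))
    {ψ : M} (hi : iξ ψ = 0) (hiV : iVξ ψ = 0) :
    iVξ (iξ (w (wV ψ))) = (c * c) • ψ := by
  have hiwV : iξ (wV ψ) = 0 := by rw [hcomm, hi, map_zero]
  rw [apply_apply_eq_smul_of_anticomm hclif hiwV, map_smul,
    apply_apply_eq_smul_of_anticomm hclifV hiV, smul_smul]

end Clifford

theorem symbol_injectivity_H_general
    {V : Type*} [NormedAddCommGroup V]
    {D : Type*} [NormedAddCommGroup D] [InnerProductSpace ℝ D]
    (ξ : V) (hξ : ξ ≠ 0)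
    (w wV iξ iVξ T : D →ₗ[ℝ] D)
    -- i^V_{ξ^♯} ψ = (i_{ξ^♯} ψ^T)^T
    (hTiV : ∀ x, iVξ (T x) = T (iξ x))
    (hclif : ∀ x, iξ (w x) + w (iξ x) = (‖ξ‖ ^ 2 : ℝ) • x)
    (hclifV : ∀ x, iVξ (wV x) + wV (iVξ x) = (‖ξ‖ ^ 2 : ℝ) • x)
    -- operations acting on different factors commute
    (hcomm1 : ∀ x, iξ (wV x) = wV (iξ x))
    (ψ : D)
    (hsymm : T ψ = ψ)
    (h1 : iξ ψ = 0) (h2 : w (wV ψ) = 0) :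
    ψ = 0 := by
  have hiV : iVξ ψ = 0 := by rw [← hsymm, hTiV, h1, map_zero]
  have hψ : (‖ξ‖ ^ 2 * ‖ξ‖ ^ 2) • ψ = 0 := by
    rw [← interior_interior_wedge_wedge hclif hclifV hcomm1 h1 hiV, h2, map_zero, map_zero]
  have hξ2 : ‖ξ‖ ^ 2 ≠ 0 := pow_ne_zero _ (norm_ne_zero_iff.mpr hξ)
  exact (smul_eq_zero_iff_right (mul_ne_zero hξ2 hξ2)).mp hψ

/-- For `ξ ∈ V*` nonzero, if `ψ` is a symmetric `(m,m)`-double covector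
(`ψ^T = ψ`) with `i_{ξ^♯} ψ = 0` and `ξ ∧ ξ_V ∧ ψ = 0`, then `ψ = 0`; that is, the symbol
map `ψ ↦ (i_{ξ^♯}ψ, ξ∧ξ_V∧ψ)` of `δ^∇ ⊕ H` is injective on symmetric `(m,m)`-covectors.
Here `w = ξ∧·` (form factor), `wV = ξ_V∧·` (vector factor), `iξ`, `iVξ` the interior
products, and `T` the involution swapping the two factors. -/
theorem symbol_injectivity_H
    {V : Type*} [NormedAddCommGroup V] [InnerProductSpace ℝ V]
    {D : Type*} [NormedAddCommGroup D] [InnerProductSpace ℝ D]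
    (Λ : ℤ → ℤ → Submodule ℝ D)
    (ξ : V) (hξ : ξ ≠ 0)
    (w wV iξ iVξ T : D →ₗ[ℝ] D)
    (hT : ∀ x, T (T x) = x)
    -- i^V_{ξ^♯} ψ = (i_{ξ^♯} ψ^T)^T
    (hTiV : ∀ x, iVξ (T x) = T (iξ x))
    (hclif : ∀ x, iξ (w x) + w (iξ x) = (‖ξ‖ ^ 2 : ℝ) • x)
    (hclifV : ∀ x, iVξ (wV x) + wV (iVξ x) = (‖ξ‖ ^ 2 : ℝ) • x)
    -- operations acting on different factors commute
    (hcomm1 : ∀ x, iξ (wV x) = wV (iξ x))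
    (hcomm2 : ∀ x, iVξ (w x) = w (iVξ x))
    (m : ℤ) (ψ : D) (hψ : ψ ∈ Λ m m)
    (hsymm : T ψ = ψ)
    (h1 : iξ ψ = 0) (h2 : w (wV ψ) = 0) :
    ψ = 0 :=
  symbol_injectivity_H_general ξ hξ w wV iξ iVξ T hTiV hclif hclifV hcomm1 ψ hsymm h1 h2
end

section
/- Consider the linear ODE system on [0,∞) for complex scalar functions ψ₁₁, ψ₁₂, ψ₂₂: ψ₁₁ + i ψ̇₁₂ = 0, ψ₁₂ + i ψ̇₂₂ = 0, and ψ₂₂ − 2i ψ̇₁₂ − ψ̈₁₁ = 0. If (ψ₁₁, ψ₁₂, ψ₂₂) is a solution decaying at infinity and satisfies the initial conditions ψ₁₁(0) = 0 and i ψ̇₁₁(0) − 2 ψ₁₂(0) = 0, then ψ₁₁ ≡ ψ₁₂ ≡ ψ₂₂ ≡ 0. -/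
/-!
With `χ = ψ̇₁₁`, (EQ:11) is a first-order system for `(ψ₁₁, ψ₁₂, ψ₂₂, χ)` whose matrix has the
eigenvalues `±1`, each with a single Jordan block of size two. The combination
`ψ₁₁ + iψ₁₂ + ψ₂₂ + χ` solves `f' = f` and grows at most linearly (`χ` has a decaying derivative),
so it vanishes; then `2ψ₁₁ - iψ₁₂ + χ` solves `g' = g` and decays, so it vanishes as well.
At `s = 0` this and the boundary conditions give `ψ₁₂(0) = 0`, after which `ψ₁₁ - iψ₁₂` and then
`ψ₁₂` solve `w' = -w` with `w(0) = 0`.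
-/

open Complex Filter Asymptotics Set

variable {E : Type*} [NormedAddCommGroup E]

theorem eq_exp_smul_of_hasDerivAt [NormedSpace ℂ E] {h : ℝ → E} {c : ℂ}
    (hd : ∀ s, 0 ≤ s → HasDerivAt h (c • h s) s) :
    ∀ s, 0 ≤ s → h s = exp (c * s) • h 0 := by
  have hexp (t : ℝ) : HasDerivAt (fun t : ℝ => exp (-c * t)) (-c * exp (-c * t)) t := by
    simpa [mul_comm] using ((hasDerivAt_id (t : ℂ)).const_mul (-c)).cexp.comp_ofReal
  set H : ℝ → E := fun t => exp (-c * t) • h t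
  have hH : ∀ t, 0 ≤ t → HasDerivAt H 0 t := fun t ht => by
    refine ((hexp t).smul (hd t ht)).congr_deriv ?_
    rw [smul_smul, ← add_smul, mul_comm, ← add_mul, add_neg_cancel, zero_mul, zero_smul]
  intro s hs
  have hconst : H s = H 0 := constant_of_has_deriv_right_zero
    (fun t ht => (hH t ht.1).continuousAt.continuousWithinAt)
    (fun t ht => (hH t ht.1).hasDerivWithinAt) s (right_mem_Icc.2 hs)
  simpa [H, smul_smul, ← Complex.exp_add] using congrArg (exp (c * s) • ·) hconst

theorem eq_zero_of_hasDerivAt_smul_self [NormedSpace ℂ E] {h : ℝ → E} {c : ℂ}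
    (hd : ∀ s, 0 ≤ s → HasDerivAt h (c • h s) s) (h0 : h 0 = 0) :
    ∀ s, 0 ≤ s → h s = 0 := fun s hs => by
  rw [eq_exp_smul_of_hasDerivAt hd s hs, h0, smul_zero]

theorem isBigO_id_of_tendsto {f : ℝ → E} {c : E} (hf : Tendsto f atTop (nhds c)) :
    f =O[atTop] id :=
  (hf.isBigO_one ℝ).trans (isLittleO_const_id_atTop (1 : ℝ)).isBigO

theorem isBigO_id_of_hasDerivAt [NormedSpace ℝ E] {f f' : ℝ → E}
    (hd : ∀ᶠ s in atTop, HasDerivAt f (f' s) s) (hf' : f' =O[atTop] fun _ => (1 : ℝ)) :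
    f =O[atTop] id := by
  obtain ⟨C, hC⟩ := hf'.bound
  obtain ⟨M, hM⟩ := eventually_atTop.1 ((hd.and hC).and (eventually_ge_atTop 0))
  have hM₀ : 0 ≤ M := (hM M le_rfl).2
  have hC₀ : 0 ≤ C := by simpa using (norm_nonneg _).trans (hM M le_rfl).1.2
  have hlin : (fun s => f s - f M) =O[atTop] id := by
    refine IsBigO.of_bound C ?_
    filter_upwards [eventually_ge_atTop M] with s hs
    calc ‖f s - f M‖ ≤ C * (s - M) := norm_image_sub_le_of_norm_deriv_le_segment'
          (fun x hx => (hM x hx.1).1.1.hasDerivWithinAt)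
          (fun x hx => by simpa using (hM x hx.1).1.2) s (right_mem_Icc.2 hs)
      _ ≤ C * ‖id s‖ := by
        rw [id, Real.norm_of_nonneg (hM₀.trans hs)]
        gcongr
        linarith
  simpa using hlin.add (isLittleO_const_id_atTop (f M)).isBigO

theorem eq_zero_of_hasDerivAt_self_of_isBigO_id [NormedSpace ℂ E] {h : ℝ → E}
    (hd : ∀ s, 0 ≤ s → HasDerivAt h (h s) s) (hO : h =O[atTop] id) :
    ∀ s, 0 ≤ s → h s = 0 := by
  have hd₁ : ∀ s, 0 ≤ s → HasDerivAt h ((1 : ℂ) • h s) s := by simpa using hd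
  suffices h 0 = 0 from eq_zero_of_hasDerivAt_smul_self hd₁ this
  have hexp := eq_exp_smul_of_hasDerivAt hd₁
  by_contra h0
  have hexpO : Real.exp =O[atTop] h := by
    refine IsBigO.of_bound ‖h 0‖⁻¹ ?_
    filter_upwards [eventually_ge_atTop 0] with s hs
    rw [hexp s hs, norm_smul, one_mul, ← ofReal_exp, norm_real,
      Real.norm_of_nonneg (Real.exp_pos s).le, mul_comm (Real.exp s),
      inv_mul_cancel_left₀ (norm_ne_zero_iff.2 h0)]
  have hid : (fun s : ℝ => s) =o[atTop] Real.exp := by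
    simpa using Real.isLittleO_pow_exp_atTop (n := 1)
  exact isLittleO_irrefl (.of_forall fun s => (Real.exp_pos s).ne')
    ((hexpO.trans hO).trans_isLittleO hid)

/-- (EQ:11) solved for the derivatives, with `χ` in the role of `ψ̇₁₁`. -/
structure IsReducedSolution (ψ₁₁ ψ₁₂ ψ₂₂ χ : ℝ → ℂ) : Prop where
  hasDerivAt₁₁ : ∀ s, 0 ≤ s → HasDerivAt ψ₁₁ (χ s) s
  hasDerivAt₁₂ : ∀ s, 0 ≤ s → HasDerivAt ψ₁₂ (I * ψ₁₁ s) s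
  hasDerivAt₂₂ : ∀ s, 0 ≤ s → HasDerivAt ψ₂₂ (I * ψ₁₂ s) s
  hasDerivAt_χ : ∀ s, 0 ≤ s → HasDerivAt χ (ψ₂₂ s + 2 * ψ₁₁ s) s

namespace IsReducedSolution

variable {ψ₁₁ ψ₁₂ ψ₂₂ χ : ℝ → ℂ}

theorem growing_mode_eq_zero (H : IsReducedSolution ψ₁₁ ψ₁₂ ψ₂₂ χ)
    (h₁₁ : Tendsto ψ₁₁ atTop (nhds 0)) (h₁₂ : Tendsto ψ₁₂ atTop (nhds 0))
    (h₂₂ : Tendsto ψ₂₂ atTop (nhds 0)) :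
    ∀ s, 0 ≤ s → ψ₁₁ s + I * ψ₁₂ s + ψ₂₂ s + χ s = 0 := by
  refine eq_zero_of_hasDerivAt_self_of_isBigO_id (fun s hs => ?_) ?_
  · refine ((((H.hasDerivAt₁₁ s hs).add ((H.hasDerivAt₁₂ s hs).const_mul I)).add
      (H.hasDerivAt₂₂ s hs)).add (H.hasDerivAt_χ s hs)).congr_deriv ?_
    linear_combination ψ₁₁ s * I_sq
  · have hχ : χ =O[atTop] id := isBigO_id_of_hasDerivAt
      ((eventually_ge_atTop 0).mono H.hasDerivAt_χ)
      ((h₂₂.add (h₁₁.const_mul 2)).isBigO_one ℝ)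
    exact (isBigO_id_of_tendsto ((h₁₁.add (h₁₂.const_mul I)).add h₂₂)).add hχ

theorem second_growing_mode_eq_zero (H : IsReducedSolution ψ₁₁ ψ₁₂ ψ₂₂ χ)
    (h₁₁ : Tendsto ψ₁₁ atTop (nhds 0)) (h₁₂ : Tendsto ψ₁₂ atTop (nhds 0))
    (h₂₂ : Tendsto ψ₂₂ atTop (nhds 0)) :
    ∀ s, 0 ≤ s → 2 * ψ₁₁ s - I * ψ₁₂ s + χ s = 0 := by
  have hf := H.growing_mode_eq_zero h₁₁ h₁₂ h₂₂
  refine eq_zero_of_hasDerivAt_self_of_isBigO_id (fun s hs => ?_)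
    (isBigO_id_of_tendsto (c := 0) ?_)
  · refine ((((H.hasDerivAt₁₁ s hs).const_mul 2).sub ((H.hasDerivAt₁₂ s hs).const_mul I)).add
      (H.hasDerivAt_χ s hs)).congr_deriv ?_
    linear_combination hf s hs - ψ₁₁ s * I_sq
  · have hχ : Tendsto χ atTop (nhds 0) := by
      refine (((h₁₁.add (h₁₂.const_mul I)).add h₂₂).neg.congr' ?_).trans (by simp)
      filter_upwards [eventually_ge_atTop 0] with s hs
      linear_combination - hf s hs
    simpa using ((h₁₁.const_mul 2).sub (h₁₂.const_mul I)).add hχ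

theorem eq_zero (H : IsReducedSolution ψ₁₁ ψ₁₂ ψ₂₂ χ)
    (h₁₁ : Tendsto ψ₁₁ atTop (nhds 0)) (h₁₂ : Tendsto ψ₁₂ atTop (nhds 0))
    (h₂₂ : Tendsto ψ₂₂ atTop (nhds 0)) (h₁₁0 : ψ₁₁ 0 = 0) (hχ0 : I * χ 0 - 2 * ψ₁₂ 0 = 0) :
    ∀ s, 0 ≤ s → ψ₁₁ s = 0 ∧ ψ₁₂ s = 0 ∧ ψ₂₂ s = 0 := by
  have hf := H.growing_mode_eq_zero h₁₁ h₁₂ h₂₂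
  have hg := H.second_growing_mode_eq_zero h₁₁ h₁₂ h₂₂
  have h₁₂0 : ψ₁₂ 0 = 0 := by
    linear_combination (I * hg 0 le_rfl - hχ0 + ψ₁₂ 0 * I_sq - 2 * I * h₁₁0) / 3
  have hw : ∀ s, 0 ≤ s → ψ₁₁ s - I * ψ₁₂ s = 0 := by
    refine eq_zero_of_hasDerivAt_smul_self (c := -1) (fun s hs => ?_) (by simp [h₁₁0, h₁₂0])
    refine ((H.hasDerivAt₁₁ s hs).sub ((H.hasDerivAt₁₂ s hs).const_mul I)).congr_deriv ?_
    rw [smul_eq_mul]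
    linear_combination hg s hs - ψ₁₁ s * I_sq
  have hψ₁₂ : ∀ s, 0 ≤ s → ψ₁₂ s = 0 := by
    refine eq_zero_of_hasDerivAt_smul_self (c := -1) (fun s hs => ?_) h₁₂0
    refine (H.hasDerivAt₁₂ s hs).congr_deriv ?_
    rw [smul_eq_mul]
    linear_combination I * hw s hs + ψ₁₂ s * I_sq
  intro s hs
  have hψ₁₁ : ψ₁₁ s = 0 := by linear_combination hw s hs + I * hψ₁₂ s hs
  refine ⟨hψ₁₁, hψ₁₂ s hs, ?_⟩
  linear_combination hf s hs - hg s hs + hψ₁₁ - 2 * I * hψ₁₂ s hs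

end IsReducedSolution

/-- For the linear ODE system on `[0,∞)`:
`ψ₁₁ + i ψ̇₁₂ = 0`, `ψ₁₂ + i ψ̇₂₂ = 0`, `ψ₂₂ − 2i ψ̇₁₂ − ψ̈₁₁ = 0`,
any solution decaying at infinity and satisfying the initial conditions `ψ₁₁(0) = 0` and
`i ψ̇₁₁(0) − 2 ψ₁₂(0) = 0` vanishes identically. -/
theorem ode_decaying_solutions_eq11
    (ψ₁₁ ψ₁₂ ψ₂₂ : ℝ → ℂ)
    (h11 : Differentiable ℝ ψ₁₁) (h11' : Differentiable ℝ (deriv ψ₁₁))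
    (h12 : Differentiable ℝ ψ₁₂) (h22 : Differentiable ℝ ψ₂₂)
    (heq1 : ∀ s : ℝ, 0 ≤ s → ψ₁₁ s + Complex.I * deriv ψ₁₂ s = 0)
    (heq2 : ∀ s : ℝ, 0 ≤ s → ψ₁₂ s + Complex.I * deriv ψ₂₂ s = 0)
    (heq3 : ∀ s : ℝ, 0 ≤ s →
      ψ₂₂ s - 2 * Complex.I * deriv ψ₁₂ s - deriv (deriv ψ₁₁) s = 0)
    (hdecay1 : Tendsto ψ₁₁ atTop (nhds 0))
    (hdecay2 : Tendsto ψ₁₂ atTop (nhds 0))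
    (hdecay3 : Tendsto ψ₂₂ atTop (nhds 0))
    (hic1 : ψ₁₁ 0 = 0)
    (hic2 : Complex.I * deriv ψ₁₁ 0 - 2 * ψ₁₂ 0 = 0) :
    ∀ s : ℝ, 0 ≤ s → ψ₁₁ s = 0 ∧ ψ₁₂ s = 0 ∧ ψ₂₂ s = 0 := by
  have H : IsReducedSolution ψ₁₁ ψ₁₂ ψ₂₂ (deriv ψ₁₁) := by
    refine ⟨fun s _ => (h11 s).hasDerivAt, fun s hs => ?_, fun s hs => ?_, fun s hs => ?_⟩
    · refine (h12 s).hasDerivAt.congr_deriv ?_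
      linear_combination -I * heq1 s hs + deriv ψ₁₂ s * I_sq
    · refine (h22 s).hasDerivAt.congr_deriv ?_
      linear_combination -I * heq2 s hs + deriv ψ₂₂ s * I_sq
    · refine (h11' s).hasDerivAt.congr_deriv ?_
      linear_combination -heq3 s hs - 2 * heq1 s hs
  exact H.eq_zero hdecay1 hdecay2 hdecay3 hic1 hic2
end
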